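/- arXiv:1805.00913 — 6 statements merged into one kernel-verified Lean document; each statement's English description precedes it below -/
import Mathlib

section
/- Suppose in round t the proposer i offers an outcome o ∉ L_t^i and the responder j rejects. Then the new responder's lower set equals the old proposer's lower set: L_{t+1}^j = L_t^i. -/
def respSize (m : ℕ) : ℕ := m / 2

def propSize (m : ℕ) : ℕ := if m % 2 = 1 then m / 2 else m / 2 - 1

def IsLowSet {α : Type*} (O : Finset α) (r : α → ℕ) (n : ℕ) (L : Finset α) : Prop :=
  L ⊆ O ∧ L.card = n ∧ ∀ a ∈ L, ∀ b ∈ O, b ∉ L → r a < r b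

/-! Removing an outcome outside `Li` keeps `Li` a low set of the same size, and that size,
`propSize m`, is exactly the responder's size `respSize (m - 1)` in the next round. Low sets of a
given size are unique: an element of one but not the other would have to rank both strictly
below and strictly above an element of the other but not the first. -/

theorem respSize_sub_one (m : ℕ) : respSize (m - 1) = propSize m := by
  unfold respSize propSize
  split_ifs <;> omega

namespace IsLowSet

variable {α : Type*} {O L L' : Finset α} {r : α → ℕ} {n : ℕ}

theorem subset (hL : IsLowSet O r n L) (hL' : IsLowSet O r n L') : L' ⊆ L := by
  by_contra hsub
  obtain ⟨a, haL', haL⟩ := Finset.not_subset.mp hsub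
  have hnsub : ¬L ⊆ L' := fun h =>
    haL (Finset.eq_of_subset_of_card_le h (by rw [hL.2.1, hL'.2.1]) ▸ haL')
  obtain ⟨b, hbL, hbL'⟩ := Finset.not_subset.mp hnsub
  exact lt_asymm (hL.2.2 b hbL a (hL'.1 haL') haL) (hL'.2.2 a haL' b (hL.1 hbL) hbL')

theorem unique (hL : IsLowSet O r n L) (hL' : IsLowSet O r n L') : L = L' :=
  (hL'.subset hL).antisymm (hL.subset hL')

theorem erase [DecidableEq α] (hL : IsLowSet O r n L) {o : α} (ho : o ∉ L) :
    IsLowSet (O.erase o) r n L :=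
  ⟨fun _ hx => Finset.mem_erase.mpr ⟨ne_of_mem_of_not_mem hx ho, hL.1 hx⟩, hL.2.1,
    fun a ha b hb hbL => hL.2.2 a ha b (Finset.mem_of_mem_erase hb) hbL⟩

end IsLowSet

theorem lower_set_unchanged_of_offer_outside_general {α : Type*} [DecidableEq α]
    (O : Finset α) (r : α → ℕ) (o : α)
    (Li L' : Finset α)
    (hLi : IsLowSet O r (propSize O.card) Li)
    (hoLi : o ∉ Li)
    (hL' : IsLowSet (O.erase o) r (respSize (O.card - 1)) L') :
    L' = Li := by
  have hLi' := hLi.erase hoLi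
  rw [← respSize_sub_one] at hLi'
  exact hL'.unique hLi'

/-- if the proposer `i` offers `o ∉ L_t^i` and the responder rejects,
then the new responder's (agent `i`'s) lower set over `O \ {o}` equals `L_t^i`. -/
theorem lower_set_unchanged_of_offer_outside {α : Type*} [DecidableEq α]
    (O : Finset α) (r : α → ℕ) (hr : Set.InjOn r O) (o : α) (ho : o ∈ O)
    (Li L' : Finset α)
    (hLi : IsLowSet O r (propSize O.card) Li)
    (hoLi : o ∉ Li)
    (hL' : IsLowSet (O.erase o) r (respSize (O.card - 1)) L') :
    L' = Li :=
  lower_set_unchanged_of_offer_outside_general O r o Li L' hLi hoLi hL'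
end

section
/- In the alternating-offers negotiation over m outcomes where no offer can be repeated and the last remaining outcome is accepted, each party can guarantee (by rejecting appropriately) that the final accepted outcome is not among her floor(m/2) lowest-ranked outcomes if she is the responder in round 1, nor among her floor(m/2) (m odd) or m/2 − 1 (m even) lowest-ranked outcomes if she is the proposer in round 1. Consequently, if both parties are rational, the negotiation result lies outside Low_1 = L_1^1 ∪ L_1^2. -/
/-- A strategy in the VAOV game: an offering rule and a response (accept?) rule. -/
abbrev NegStrat (α : Type*) := (Finset α → α) × (Finset α → α → Bool)

/-- The outcome of the VAOV game from the set `O` of available outcomes, where `S1`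
is the strategy of the current proposer and `S2` that of the current responder:
if one outcome remains it is accepted; otherwise the proposer offers, and the
responder either accepts or rejects, in which case roles switch and the offer is
removed. (Invalid offers return junk; they never occur for valid strategies.) -/
noncomputable def play {α : Type*} [DecidableEq α] [Inhabited α]
    (S1 S2 : NegStrat α) (O : Finset α) : α :=
  if O.card ≤ 1 then (if h : O.Nonempty then Classical.choose h else default)
  else if ho : S1.1 O ∈ O then
    (if S2.2 O (S1.1 O) = true then S1.1 O else play S2 S1 (O.erase (S1.1 O)))
  else default
termination_by O.card
decreasing_by exact Finset.card_erase_lt_of_mem ho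

/-- A strategy always offers an available outcome. -/
def ValidStrat {α : Type*} (S : NegStrat α) : Prop :=
  ∀ O : Finset α, O.Nonempty → S.1 O ∈ O

/-!
A party facing `k` of her unacceptable outcomes among the `m` still available ones rejects
exactly those offers and, when proposing, only offers acceptable outcomes. Each rejection of
one of her offers costs nothing, and each rejection she makes uses up one unacceptable outcome;
since the roles alternate, this works as a responder as long as `k ≤ m / 2` and as the proposer
as long as `k ≤ (m - 1) / 2`, the last remaining outcome then being acceptable.
-/

lemma propSize_eq (m : ℕ) : propSize m = (m - 1) / 2 := by
  unfold propSize
  split <;> omega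

lemma propSize_succ (m : ℕ) : propSize (m + 1) = respSize m := by
  rw [propSize_eq, respSize, Nat.add_sub_cancel]

lemma respSize_succ_le (m : ℕ) : respSize (m + 1) ≤ propSize m + 1 := by
  rw [propSize_eq, respSize]
  omega

lemma propSize_lt {m : ℕ} (hm : 0 < m) : propSize m < m := by
  rw [propSize_eq]
  omega

section Game

variable {α : Type*} [DecidableEq α] [Inhabited α]

lemma play_mem_of_card_eq_one (S1 S2 : NegStrat α) {O : Finset α} (hO : O.card = 1) :
    play S1 S2 O ∈ O := by
  have hne : O.Nonempty := Finset.card_pos.mp (by omega)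
  rw [play, if_pos hO.le, dif_pos hne]
  exact hne.choose_spec

lemma play_of_one_lt_card (S1 S2 : NegStrat α) {O : Finset α} (hO : 1 < O.card)
    (hoffer : S1.1 O ∈ O) :
    play S1 S2 O =
      if S2.2 O (S1.1 O) = true then S1.1 O else play S2 S1 (O.erase (S1.1 O)) := by
  rw [play, if_neg hO.not_ge, dif_pos hoffer]

noncomputable def avoidStrat (L : Finset α) : NegStrat α :=
  (fun O => if h : (O \ L).Nonempty then h.choose
            else if h' : O.Nonempty then h'.choose else default,
   fun _ x => decide (x ∉ L))

lemma validStrat_avoidStrat (L : Finset α) : ValidStrat (avoidStrat L) := by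
  intro O hO
  simp only [avoidStrat]
  split
  · next h => exact (Finset.mem_sdiff.mp h.choose_spec).1
  · exact hO.choose_spec

lemma avoidStrat_offer_mem_sdiff {L O : Finset α} (h : (O \ L).Nonempty) :
    (avoidStrat L).1 O ∈ O \ L := by
  simp only [avoidStrat, dif_pos h]
  exact h.choose_spec

lemma avoidStrat_accept_iff (L O : Finset α) (x : α) :
    (avoidStrat L).2 O x = true ↔ x ∉ L := by
  simp [avoidStrat]

def ResponderAvoids (L O : Finset α) : Prop :=
  ∀ S1 : NegStrat α, ValidStrat S1 → play S1 (avoidStrat L) O ∉ L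

def ProposerAvoids (L O : Finset α) : Prop :=
  ∀ S2 : NegStrat α, ValidStrat S2 → play (avoidStrat L) S2 O ∉ L

lemma play_notMem_of_card_eq_one (S1 S2 : NegStrat α) {L O : Finset α} (hO : O.card = 1)
    (hLO : L ∩ O = ∅) : play S1 S2 O ∉ L := fun hL =>
  Finset.notMem_empty _ (hLO ▸ Finset.mem_inter.mpr ⟨hL, play_mem_of_card_eq_one S1 S2 hO⟩)

lemma responderAvoids_of_forall_erase {L O : Finset α} (hO : 1 < O.card)
    (hnext : ∀ x ∈ L ∩ O, ProposerAvoids L (O.erase x)) : ResponderAvoids L O := by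
  intro S1 hS1
  have hoffer : S1.1 O ∈ O := hS1 O (Finset.card_pos.mp (by omega))
  rw [play_of_one_lt_card S1 _ hO hoffer]
  by_cases hL : S1.1 O ∈ L
  · have hreject : (avoidStrat L).2 O (S1.1 O) ≠ true :=
      fun h => (avoidStrat_accept_iff L O _).mp h hL
    rw [if_neg hreject]
    exact hnext _ (Finset.mem_inter.mpr ⟨hL, hoffer⟩) S1 hS1
  · rw [if_pos ((avoidStrat_accept_iff L O _).mpr hL)]
    exact hL

lemma proposerAvoids_of_erase {L O : Finset α} (hO : 1 < O.card) (hfree : (O \ L).Nonempty)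
    (hnext : ResponderAvoids L (O.erase ((avoidStrat L).1 O))) : ProposerAvoids L O := by
  intro S2 hS2
  obtain ⟨hoffer, hL⟩ := Finset.mem_sdiff.mp (avoidStrat_offer_mem_sdiff hfree)
  rw [play_of_one_lt_card _ S2 hO hoffer]
  split
  · exact hL
  · exact hnext S2 hS2

lemma avoids_of_card_inter_le (L : Finset α) (n : ℕ) {O : Finset α} (hO : O.card = n + 1) :
    ((L ∩ O).card ≤ respSize O.card → ResponderAvoids L O) ∧
    ((L ∩ O).card ≤ propSize O.card → ProposerAvoids L O) := by
  induction n generalizing O with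
  | zero =>
    have hempty : (L ∩ O).card ≤ 0 → L ∩ O = ∅ := fun hk => Finset.card_eq_zero.mp (by omega)
    rw [hO]
    exact ⟨fun hk S1 _ => play_notMem_of_card_eq_one _ _ hO (hempty hk),
      fun hk S2 _ => play_notMem_of_card_eq_one _ _ hO (hempty hk)⟩
  | succ n ih =>
    rw [hO]
    refine ⟨fun hk => responderAvoids_of_forall_erase (by omega) fun x hx => ?_, fun hk => ?_⟩
    · have hx' : x ∈ O := (Finset.mem_inter.mp hx).2
      have hcard : (O.erase x).card = n + 1 := by rw [Finset.card_erase_of_mem hx', hO]; rfl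
      refine (ih hcard).2 ?_
      have hpos : 0 < (L ∩ O).card := Finset.card_pos.mpr ⟨x, hx⟩
      rw [Finset.inter_erase, Finset.card_erase_of_mem hx, hcard]
      have := respSize_succ_le (n + 1)
      omega
    · have hfree : (O \ L).Nonempty := by
        rw [Finset.sdiff_nonempty]
        intro hOL
        rw [Finset.inter_eq_right.mpr hOL, hO] at hk
        exact (propSize_lt (Nat.succ_pos _)).not_ge hk
      obtain ⟨hoffer, hL⟩ := Finset.mem_sdiff.mp (avoidStrat_offer_mem_sdiff hfree)
      have hcard : (O.erase ((avoidStrat L).1 O)).card = n + 1 := by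
        rw [Finset.card_erase_of_mem hoffer, hO]; rfl
      refine proposerAvoids_of_erase (by omega) hfree ((ih hcard).1 ?_)
      rw [Finset.inter_erase, Finset.erase_eq_of_notMem (fun h => hL (Finset.mem_inter.mp h).1),
        hcard, ← propSize_succ]
      exact hk

end Game

theorem guarantee_result_outside_lower_sets_general {α : Type*} [DecidableEq α] [Inhabited α]
    (O : Finset α) (hO : O.Nonempty) (r1 r2 : α → ℕ)
    (L1 L2 : Finset α)
    (hL1 : IsLowSet O r1 (propSize O.card) L1)
    (hL2 : IsLowSet O r2 (respSize O.card) L2) :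
    (∃ S1 : NegStrat α, ValidStrat S1 ∧
      ∀ S2 : NegStrat α, ValidStrat S2 → play S1 S2 O ∉ L1) ∧
    (∃ S2 : NegStrat α, ValidStrat S2 ∧
      ∀ S1 : NegStrat α, ValidStrat S1 → play S1 S2 O ∉ L2) := by
  obtain ⟨n, hn⟩ := Nat.exists_eq_succ_of_ne_zero (Finset.card_pos.mpr hO).ne'
  have hcard1 : (L1 ∩ O).card = propSize O.card := by
    rw [Finset.inter_eq_left.mpr hL1.1, hL1.2.1]
  have hcard2 : (L2 ∩ O).card = respSize O.card := by
    rw [Finset.inter_eq_left.mpr hL2.1, hL2.2.1]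
  exact ⟨⟨avoidStrat L1, validStrat_avoidStrat L1, (avoids_of_card_inter_le L1 n hn).2 hcard1.le⟩,
    ⟨avoidStrat L2, validStrat_avoidStrat L2, (avoids_of_card_inter_le L2 n hn).1 hcard2.le⟩⟩

/-- in the VAOV game, the first mover can guarantee that the result is
not among her `propSize m` lowest-ranked outcomes, and the second mover can
guarantee that the result is not among her `respSize m` lowest-ranked outcomes;
consequently, if both are rational the result lies outside `L_1^1 ∪ L_1^2`. -/
theorem guarantee_result_outside_lower_sets {α : Type*} [DecidableEq α] [Inhabited α]
    (O : Finset α) (hO : O.Nonempty) (r1 r2 : α → ℕ)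
    (h1 : Set.InjOn r1 O) (h2 : Set.InjOn r2 O) (L1 L2 : Finset α)
    (hL1 : IsLowSet O r1 (propSize O.card) L1)
    (hL2 : IsLowSet O r2 (respSize O.card) L2) :
    (∃ S1 : NegStrat α, ValidStrat S1 ∧
      ∀ S2 : NegStrat α, ValidStrat S2 → play S1 S2 O ∉ L1) ∧
    (∃ S2 : NegStrat α, ValidStrat S2 ∧
      ∀ S1 : NegStrat α, ValidStrat S1 → play S1 S2 O ∉ L2) :=
  guarantee_result_outside_lower_sets_general O hO r1 r2 L1 L2 hL1 hL2
end

section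
/- If the two strict linear orders ≻_1 and ≻_2 over a finite set O are exactly opposite (o ≻_1 o' iff o' ≻_2 o), then the RC rule returns: the unique middle-ranked outcome when |O| is odd, and the two middle-ranked outcomes when |O| is even. -/
/-!
Measure every outcome by its rank `k` under `≻₁`, the number of outcomes below it. A top-`v`
set of an order consists exactly of the outcomes of rank at least `m - v`, and reversing the
order sends rank `k` to `m - 1 - k`. Hence the two top-`v` sets meet in the outcomes with
`m - v ≤ k < v`, which is nonempty exactly when `v > m / 2`; at `v = m / 2 + 1` these are the
ranks `(m - 1) / 2 ≤ k ≤ m / 2`.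
-/

def IsTopSet {α : Type*} (O : Finset α) (r : α → ℕ) (v : ℕ) (B : Finset α) : Prop :=
  B ⊆ O ∧ B.card = v ∧ ∀ a ∈ B, ∀ b ∈ O, b ∉ B → r b < r a

open Finset

namespace Finset

variable {α β : Type*} [LinearOrder β] {O : Finset α} {r : α → β} {a b o : α}

def rankBy (O : Finset α) (r : α → β) (o : α) : ℕ := #{x ∈ O | r x < r o}

lemma rankBy_lt_card (ho : o ∈ O) : O.rankBy r o < #O :=
  card_lt_card (filter_ssubset.2 ⟨o, ho, lt_irrefl _⟩)

lemma rankBy_lt_rankBy (ha : a ∈ O) (hab : r a < r b) : O.rankBy r a < O.rankBy r b := by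
  refine card_lt_card ((ssubset_iff_of_subset ?_).2 ⟨a, mem_filter.2 ⟨ha, hab⟩, ?_⟩)
  · exact monotone_filter_right O fun _ _ hx => hx.trans hab
  · simp

lemma injOn_rankBy (hr : Set.InjOn r O) : Set.InjOn (O.rankBy r) O := by
  intro a ha b hb hab
  refine hr ha hb ?_
  rcases lt_trichotomy (r a) (r b) with hlt | heq | hgt
  · exact absurd hab (rankBy_lt_rankBy ha hlt).ne
  · exact heq
  · exact absurd hab (rankBy_lt_rankBy hb hgt).ne'

lemma image_rankBy (hr : Set.InjOn r O) : O.image (O.rankBy r) = range #O := by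
  refine eq_of_subset_of_card_le ?_ ?_
  · intro k hk
    obtain ⟨o, ho, rfl⟩ := mem_image.1 hk
    exact mem_range.2 (rankBy_lt_card ho)
  · rw [card_range, card_image_of_injOn (injOn_rankBy hr)]

lemma exists_rankBy_eq (hr : Set.InjOn r O) {k : ℕ} (hk : k < #O) :
    ∃ o ∈ O, O.rankBy r o = k :=
  mem_image.1 (by rwa [image_rankBy hr, mem_range])

lemma rankBy_add_card_filter_gt (hr : Set.InjOn r O) (ho : o ∈ O) :
    O.rankBy r o + #{x ∈ O | r o < r x} + 1 = #O := by
  classical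
  have hsplit : {x ∈ O | ¬ r x < r o} = insert o {x ∈ O | r o < r x} := by
    ext x
    simp only [mem_filter, mem_insert, not_lt]
    constructor
    · rintro ⟨hx, hle⟩
      rcases hle.eq_or_lt with heq | hlt
      · exact Or.inl (hr hx ho heq.symm)
      · exact Or.inr ⟨hx, hlt⟩
    · rintro (rfl | ⟨hx, hlt⟩)
      exacts [⟨ho, le_rfl⟩, ⟨hx, hlt.le⟩]
  have hcount := card_filter_add_card_filter_not (s := O) (fun x => r x < r o)
  rw [hsplit, card_insert_of_notMem (by simp)] at hcount
  rw [rankBy]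
  omega

lemma rankBy_eq_of_opposite {r₁ r₂ : α → β} (h₁ : Set.InjOn r₁ O)
    (hopp : ∀ o ∈ O, ∀ o' ∈ O, (r₁ o < r₁ o' ↔ r₂ o' < r₂ o)) (ho : o ∈ O) :
    O.rankBy r₂ o = #O - 1 - O.rankBy r₁ o := by
  have hrev : O.rankBy r₂ o = #{x ∈ O | r₁ o < r₁ x} :=
    congrArg card (filter_congr fun x hx => (hopp o ho x hx).symm)
  have := rankBy_add_card_filter_gt h₁ ho
  omega

end Finset

namespace IsTopSet

variable {α : Type*} {O B : Finset α} {r : α → ℕ} {v : ℕ} {o : α}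

lemma card_le (hB : IsTopSet O r v B) : v ≤ #O :=
  hB.2.1 ▸ card_le_card hB.1

lemma mem_iff (hB : IsTopSet O r v B) : o ∈ B ↔ o ∈ O ∧ #O - v ≤ O.rankBy r o := by
  classical
  obtain ⟨hsub, hcard, htop⟩ := hB
  have hcompl : #(O \ B) = #O - v := by rw [card_sdiff_of_subset hsub, hcard]
  constructor
  · intro ho
    refine ⟨hsub ho, hcompl ▸ card_le_card fun x hx => ?_⟩
    obtain ⟨hxO, hxB⟩ := mem_sdiff.1 hx
    exact mem_filter.2 ⟨hxO, htop o ho x hxO hxB⟩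
  · rintro ⟨hoO, hrank⟩
    by_contra hoB
    have hbelow : {x ∈ O | r x < r o} ⊂ O \ B := by
      refine (ssubset_iff_of_subset fun x hx => ?_).2 ⟨o, mem_sdiff.2 ⟨hoO, hoB⟩, by simp⟩
      obtain ⟨hxO, hxo⟩ := mem_filter.1 hx
      exact mem_sdiff.2 ⟨hxO, fun hxB => (htop x hxB o hoO hoB).not_gt hxo⟩
    have := card_lt_card hbelow
    rw [hcompl] at this
    exact absurd hrank (not_le.2 this)

lemma inter_eq_filter_of_opposite [DecidableEq α] {r₁ r₂ : α → ℕ} {B₁ B₂ : Finset α}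
    (h₁ : Set.InjOn r₁ O) (hopp : ∀ o ∈ O, ∀ o' ∈ O, (r₁ o < r₁ o' ↔ r₂ o' < r₂ o))
    (hB₁ : IsTopSet O r₁ v B₁) (hB₂ : IsTopSet O r₂ v B₂) :
    B₁ ∩ B₂ = {o ∈ O | #O - v ≤ O.rankBy r₁ o ∧ O.rankBy r₁ o < v} := by
  ext o
  rw [mem_inter, hB₁.mem_iff, hB₂.mem_iff, mem_filter]
  constructor
  · rintro ⟨⟨ho, h₁o⟩, -, h₂o⟩
    rw [rankBy_eq_of_opposite h₁ hopp ho] at h₂o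
    have := rankBy_lt_card (r := r₁) ho
    exact ⟨ho, h₁o, by omega⟩
  · rintro ⟨ho, h₁o, h₂o⟩
    have := rankBy_lt_card (r := r₁) ho
    exact ⟨⟨ho, h₁o⟩, ho, by rw [rankBy_eq_of_opposite h₁ hopp ho]; omega⟩

end IsTopSet

theorem rc_opposite_orders_middle_general {α : Type*} [DecidableEq α]
    (O : Finset α) (r1 r2 : α → ℕ)
    (h1 : Set.InjOn r1 O)
    (hopp : ∀ o ∈ O, ∀ o' ∈ O, (r1 o < r1 o' ↔ r2 o' < r2 o)) :
    ∃ v : ℕ,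
      (∀ v' < v, ∀ C1 C2 : Finset α, IsTopSet O r1 v' C1 → IsTopSet O r2 v' C2 →
        C1 ∩ C2 = ∅) ∧
      (∀ B1 B2 : Finset α, IsTopSet O r1 v B1 → IsTopSet O r2 v B2 →
        (B1 ∩ B2).Nonempty ∧
        B1 ∩ B2 = O.filter (fun o =>
          (O.card - 1) / 2 ≤ (O.filter (fun x => r1 x < r1 o)).card ∧
          (O.filter (fun x => r1 x < r1 o)).card ≤ O.card / 2)) := by
  refine ⟨#O / 2 + 1, fun v' hv' C1 C2 hC1 hC2 => ?_, fun B1 B2 hB1 hB2 => ?_⟩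
  · rw [hC1.inter_eq_filter_of_opposite h1 hopp hC2, filter_eq_empty_iff]
    intro o _
    omega
  · have hmid : B1 ∩ B2 = {o ∈ O | (#O - 1) / 2 ≤ O.rankBy r1 o ∧ O.rankBy r1 o ≤ #O / 2} := by
      rw [hB1.inter_eq_filter_of_opposite h1 hopp hB2]
      exact filter_congr fun o _ => by omega
    obtain ⟨o, ho, hrank⟩ := exists_rankBy_eq h1 (k := #O / 2) (by have := hB1.card_le; omega)
    exact ⟨⟨o, by rw [hmid, mem_filter, hrank]; exact ⟨ho, by omega, le_rfl⟩⟩, hmid⟩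

/-- if the two orders are exactly opposite, then the RC rule (the
intersection of the top-`v` sets at the smallest `v` with nonempty intersection)
consists of the middle-ranked outcome(s): the unique outcome with exactly
`(m - 1) / 2 = m / 2` outcomes strictly below it when `m` is odd, and the two
outcomes with `m / 2 - 1` or `m / 2` outcomes strictly below them when `m` is
even. -/
theorem rc_opposite_orders_middle {α : Type*} [DecidableEq α]
    (O : Finset α) (hO : O.Nonempty) (r1 r2 : α → ℕ)
    (h1 : Set.InjOn r1 O) (h2 : Set.InjOn r2 O)
    (hopp : ∀ o ∈ O, ∀ o' ∈ O, (r1 o < r1 o' ↔ r2 o' < r2 o)) :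
    ∃ v : ℕ,
      (∀ v' < v, ∀ C1 C2 : Finset α, IsTopSet O r1 v' C1 → IsTopSet O r2 v' C2 →
        C1 ∩ C2 = ∅) ∧
      (∀ B1 B2 : Finset α, IsTopSet O r1 v B1 → IsTopSet O r2 v B2 →
        (B1 ∩ B2).Nonempty ∧
        B1 ∩ B2 = O.filter (fun o =>
          (O.card - 1) / 2 ≤ (O.filter (fun x => r1 x < r1 o)).card ∧
          (O.filter (fun x => r1 x < r1 o)).card ≤ O.card / 2)) :=
  rc_opposite_orders_middle_general O r1 r2 h1 hopp
end

section
/- Every outcome in RC(≻_1, ≻_2) is Pareto optimal: if o ∈ B_v^1 ∩ B_v^2 for the minimal such v, then there is no outcome o' ∈ O with o' ≻_1 o and o' ≻_2 o. -/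
/-
Anything that both parties prefer to `o` lies in both top-`v` sets along with `o`. Removing the
bottom element of each top-`v` set gives top-`(v-1)` sets; the bottom elements are ranked no higher
than `o`, so both still contain the dominating outcome, contradicting the minimality of `v`.
-/

namespace IsTopSet

variable {α : Type*} {O B : Finset α} {r : α → ℕ} {v : ℕ}

theorem mem_of_le (hB : IsTopSet O r v B) {a b : α} (ha : a ∈ B) (hb : b ∈ O)
    (hab : r a ≤ r b) : b ∈ B := by
  by_contra hbB
  exact absurd (hB.2.2 a ha b hb hbB) (not_lt.mpr hab)

theorem erase_of_forall_le [DecidableEq α] (hB : IsTopSet O r v B) (hinj : Set.InjOn r O)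
    {m : α} (hm : m ∈ B) (hmin : ∀ b ∈ B, r m ≤ r b) :
    IsTopSet O r (v - 1) (B.erase m) := by
  obtain ⟨hsub, hcard, htop⟩ := hB
  refine ⟨(B.erase_subset m).trans hsub, by rw [Finset.card_erase_of_mem hm, hcard], ?_⟩
  intro a ha b hb hbC
  have haB := Finset.mem_of_mem_erase ha
  by_cases hbm : b = m
  · subst hbm
    have hne : r b ≠ r a := fun h => Finset.ne_of_mem_erase ha (hinj (hsub haB) hb h.symm)
    exact lt_of_le_of_ne (hmin a haB) hne
  · exact htop a haB b hb fun hbB => hbC (Finset.mem_erase.mpr ⟨hbm, hbB⟩)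

theorem exists_pred_mem_of_lt [DecidableEq α] (hB : IsTopSet O r v B) (hinj : Set.InjOn r O)
    {a b : α} (ha : a ∈ B) (hb : b ∈ O) (hab : r a < r b) :
    ∃ C, IsTopSet O r (v - 1) C ∧ b ∈ C := by
  obtain ⟨m, hm, hmin⟩ := B.exists_min_image r ⟨a, ha⟩
  have hbm : b ≠ m := by
    rintro rfl
    exact absurd (hmin a ha) (not_le.mpr hab)
  exact ⟨B.erase m, hB.erase_of_forall_le hinj hm hmin,
    Finset.mem_erase.mpr ⟨hbm, hB.mem_of_le ha hb hab.le⟩⟩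

end IsTopSet

/-- every outcome in `RC(≻_1, ≻_2)` is Pareto optimal: if
`o ∈ B_v^1 ∩ B_v^2` for the minimal `v` with nonempty intersection, then no
outcome is strictly preferred to `o` by both parties. -/
theorem rc_pareto_optimal {α : Type*} [DecidableEq α]
    (O : Finset α) (r1 r2 : α → ℕ)
    (h1 : Set.InjOn r1 O) (h2 : Set.InjOn r2 O)
    (v : ℕ) (B1 B2 : Finset α)
    (hB1 : IsTopSet O r1 v B1) (hB2 : IsTopSet O r2 v B2)
    (hmin : ∀ v' < v, ∀ C1 C2 : Finset α, IsTopSet O r1 v' C1 → IsTopSet O r2 v' C2 →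
      C1 ∩ C2 = ∅)
    (o : α) (ho : o ∈ B1 ∩ B2) :
    ¬ ∃ o' ∈ O, r1 o < r1 o' ∧ r2 o < r2 o' := by
  rintro ⟨o', ho', hlt1, hlt2⟩
  obtain ⟨hoB1, hoB2⟩ := Finset.mem_inter.mp ho
  obtain ⟨C1, hC1, ho'C1⟩ := hB1.exists_pred_mem_of_lt h1 hoB1 ho' hlt1
  obtain ⟨C2, hC2, ho'C2⟩ := hB2.exists_pred_mem_of_lt h2 hoB2 ho' hlt2
  have hv : 0 < v := hB1.2.1 ▸ Finset.card_pos.mpr ⟨o, hoB1⟩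
  have hdisj := hmin (v - 1) (Nat.sub_lt hv one_pos) C1 C2 hC1 hC2
  exact Finset.eq_empty_iff_forall_notMem.mp hdisj o' (Finset.mem_inter.mpr ⟨ho'C1, ho'C2⟩)
end

section
/- The RC rule is monotonic: let O ⊂ O' be finite sets, ≻_k' orders on O' extending ≻_k on O (for k = 1,2), and suppose o_eq ∈ RC(O, ≻_1, ≻_2) and every outcome in O' \ O is strictly preferred to o_eq by both parties under ≻_k'. Then every element o' ∈ RC(O', ≻_1', ≻_2') is weakly preferred to o_eq by both parties. -/
/-- `R` is the result of the Rational Compromise rule on `(O, r1, r2)`: the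
intersection of the two parties' top-`v` sets at the smallest `v` for which this
intersection is nonempty. -/
def IsRC {α : Type*} [DecidableEq α] (O : Finset α) (r1 r2 : α → ℕ)
    (R : Finset α) : Prop :=
  ∃ v : ℕ, R.Nonempty ∧
    (∀ B1 B2 : Finset α, IsTopSet O r1 v B1 → IsTopSet O r2 v B2 → R = B1 ∩ B2) ∧
    (∃ B1 B2 : Finset α, IsTopSet O r1 v B1 ∧ IsTopSet O r2 v B2) ∧
    (∀ v' < v, ∀ C1 C2 : Finset α, IsTopSet O r1 v' C1 → IsTopSet O r2 v' C2 →
      C1 ∩ C2 = ∅)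

lemma topset_subset {α : Type*} (O : Finset α) (r : α → ℕ) {v w : ℕ}
    {S T : Finset α} (hS : IsTopSet O r v S) (hT : IsTopSet O r w T)
    (hvw : v ≤ w) : S ⊆ T := by
  intro a ha
  by_contra haT
  have h1 : ∃ b ∈ T, b ∉ S := by
    by_contra h
    push_neg at h
    have hlt : T.card < S.card :=
      Finset.card_lt_card (Finset.ssubset_def.mpr ⟨h, fun hST => haT (hST ha)⟩)
    have e1 := hS.2.1
    have e2 := hT.2.1
    omega
  obtain ⟨b, hbT, hbS⟩ := h1
  have hba := hS.2.2 a ha b (hT.1 hbT) hbS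
  have hab := hT.2.2 b hbT a (hS.1 ha) haT
  omega

lemma topset_erase_min {α : Type*} [DecidableEq α] (O : Finset α) (r : α → ℕ)
    (hinj : Set.InjOn r O) {v : ℕ} {S : Finset α} (hS : IsTopSet O r v S)
    (hne : S.Nonempty) :
    ∃ a ∈ S, IsTopSet O r (v - 1) (S.erase a) ∧ ∀ b ∈ S, r a ≤ r b := by
  obtain ⟨a, haS, hamin⟩ := S.exists_min_image r hne
  refine ⟨a, haS, ⟨(Finset.erase_subset _ _).trans hS.1, ?_, ?_⟩, hamin⟩
  · rw [Finset.card_erase_of_mem haS, hS.2.1]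
  · intro x hx b hbO hb
    have hxS := Finset.mem_of_mem_erase hx
    by_cases hba : b = a
    · subst hba
      have hle := hamin x hxS
      have hneq : r b ≠ r x := fun h =>
        (Finset.ne_of_mem_erase hx) (hinj (hS.1 hxS) (hS.1 haS) h.symm)
      omega
    · exact hS.2.2 x hxS b hbO (fun hbS => hb (Finset.mem_erase.mpr ⟨hba, hbS⟩))

lemma isRC_swap {α : Type*} [DecidableEq α] {O : Finset α} {r1 r2 : α → ℕ}
    {R : Finset α} (h : IsRC O r1 r2 R) : IsRC O r2 r1 R := by
  obtain ⟨v, hne, huniq, ⟨B1, B2, hb1, hb2⟩, hmin⟩ := h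
  refine ⟨v, hne, fun C1 C2 hc1 hc2 => (huniq C2 C1 hc2 hc1).trans (Finset.inter_comm _ _),
    ⟨B2, B1, hb2, hb1⟩, fun w hw C1 C2 hc1 hc2 => ?_⟩
  rw [Finset.inter_comm]
  exact hmin w hw C2 C1 hc2 hc1

lemma rc_mono_side {α : Type*} [DecidableEq α]
    (O O' : Finset α) (hOO : O ⊂ O')
    (r1 r2 r1' r2' : α → ℕ)
    (h1 : Set.InjOn r1 O) (h2 : Set.InjOn r2 O)
    (h1' : Set.InjOn r1' O') (h2' : Set.InjOn r2' O')
    (hext1 : ∀ o1 ∈ O, ∀ o2 ∈ O, r1 o1 < r1 o2 → r1' o1 < r1' o2)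
    (hext2 : ∀ o1 ∈ O, ∀ o2 ∈ O, r2 o1 < r2 o2 → r2' o1 < r2' o2)
    (R : Finset α) (hR : IsRC O r1 r2 R) (oeq : α) (hoeq : oeq ∈ R)
    (hnew : ∀ o ∈ O' \ O, r1' oeq < r1' o ∧ r2' oeq < r2' o)
    (R' : Finset α) (hR' : IsRC O' r1' r2' R')
    (o' : α) (ho' : o' ∈ R') : r1' oeq ≤ r1' o' := by
  obtain ⟨v, hRne, hRuniq, ⟨B1, B2, hB1, hB2⟩, hmin⟩ := hR
  obtain ⟨v', hR'ne, hR'uniq, ⟨B1', B2', hB1', hB2'⟩, hmin'⟩ := hR'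
  have hReq : R = B1 ∩ B2 := hRuniq B1 B2 hB1 hB2
  have hR'eq : R' = B1' ∩ B2' := hR'uniq B1' B2' hB1' hB2'
  rw [hReq, Finset.mem_inter] at hoeq
  obtain ⟨hoeq1, hoeq2⟩ := hoeq
  rw [hR'eq, Finset.mem_inter] at ho'
  obtain ⟨ho'1, ho'2⟩ := ho'
  set N : Finset α := O' \ O with hN
  set m : ℕ := N.card with hm
  obtain ⟨x0, hx0O', hx0O⟩ := Finset.exists_of_ssubset hOO
  have hNne : (O' \ O).Nonempty := ⟨x0, Finset.mem_sdiff.mpr ⟨hx0O', hx0O⟩⟩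
  by_contra hcon
  push_neg at hcon
  -- o' ∈ O
  have ho'O' : o' ∈ O' := hB1'.1 ho'1
  have ho'O : o' ∈ O := by
    by_contra h
    have := (hnew o' (Finset.mem_sdiff.mpr ⟨ho'O', h⟩)).1
    omega
  have hoeqO : oeq ∈ O := hB1.1 hoeq1
  have hoeqO' : oeq ∈ O' := hOO.1 hoeqO
  have hne : o' ≠ oeq := by rintro rfl; omega
  have hlt1 : r1 o' < r1 oeq := by
    rcases lt_trichotomy (r1 o') (r1 oeq) with h | h | h
    · exact h
    · exact absurd (h1 ho'O hoeqO h) hne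
    · have := hext1 oeq hoeqO o' ho'O h; omega
  -- oeq ∈ B1', N ⊆ B1'
  have hoeqB1' : oeq ∈ B1' := by
    by_contra h
    have := hB1'.2.2 o' ho'1 oeq hoeqO' h
    omega
  have hNB1' : ∀ n ∈ O' \ O, n ∈ B1' := by
    intro n hn
    by_contra h
    have h1n := hB1'.2.2 oeq hoeqB1' n (Finset.mem_sdiff.mp hn).1 h
    have h2n := (hnew n hn).1
    omega
  -- top-(v+m) sets of O'
  have hdisj1 : Disjoint B1 N := by
    rw [hN]
    exact Finset.disjoint_sdiff.mono_left hB1.1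
  have hdisj2 : Disjoint B2 N := by
    rw [hN]
    exact Finset.disjoint_sdiff.mono_left hB2.1
  have hT1 : IsTopSet O' r1' (v + m) (B1 ∪ N) := by
    refine ⟨Finset.union_subset (hB1.1.trans hOO.1) (Finset.sdiff_subset), ?_, ?_⟩
    · rw [Finset.card_union_of_disjoint hdisj1, hB1.2.1]
    · intro a ha b hbO' hb
      have hbO : b ∈ O := by
        by_contra h
        exact hb (Finset.mem_union_right _ (Finset.mem_sdiff.mpr ⟨hbO', h⟩))
      have hbB1 : b ∉ B1 := fun h => hb (Finset.mem_union_left _ h)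
      rcases Finset.mem_union.mp ha with haB | haN
      · exact hext1 b hbO a (hB1.1 haB) (hB1.2.2 a haB b hbO hbB1)
      · have h3 := hext1 b hbO oeq hoeqO (hB1.2.2 oeq hoeq1 b hbO hbB1)
        have h4 := (hnew a haN).1
        omega
  have hT2 : IsTopSet O' r2' (v + m) (B2 ∪ N) := by
    refine ⟨Finset.union_subset (hB2.1.trans hOO.1) (Finset.sdiff_subset), ?_, ?_⟩
    · rw [Finset.card_union_of_disjoint hdisj2, hB2.2.1]
    · intro a ha b hbO' hb
      have hbO : b ∈ O := by
        by_contra h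
        exact hb (Finset.mem_union_right _ (Finset.mem_sdiff.mpr ⟨hbO', h⟩))
      have hbB2 : b ∉ B2 := fun h => hb (Finset.mem_union_left _ h)
      rcases Finset.mem_union.mp ha with haB | haN
      · exact hext2 b hbO a (hB2.1 haB) (hB2.2.2 a haB b hbO hbB2)
      · have h3 := hext2 b hbO oeq hoeqO (hB2.2.2 oeq hoeq2 b hbO hbB2)
        have h4 := (hnew a haN).2
        omega
  -- v' ≤ v + m
  have hv'le : v' ≤ v + m := by
    by_contra h
    push_neg at h
    have hemp := hmin' (v + m) h _ _ hT1 hT2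
    have : oeq ∈ (B1 ∪ N) ∩ (B2 ∪ N) :=
      Finset.mem_inter.mpr ⟨Finset.mem_union_left _ hoeq1, Finset.mem_union_left _ hoeq2⟩
    rw [hemp] at this
    exact absurd this (Finset.notMem_empty _)
  have hB1'sub : B1' ⊆ B1 ∪ N := topset_subset O' r1' hB1' hT1 hv'le
  have hB2'sub : B2' ⊆ B2 ∪ N := topset_subset O' r2' hB2' hT2 hv'le
  have ho'B1 : o' ∈ B1 := by
    rcases Finset.mem_union.mp (hB1'sub ho'1) with h | h
    · exact h
    · exact absurd (Finset.mem_sdiff.mp h).2 (not_not.mpr ho'O)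
  have ho'B2 : o' ∈ B2 := by
    rcases Finset.mem_union.mp (hB2'sub ho'2) with h | h
    · exact h
    · exact absurd (Finset.mem_sdiff.mp h).2 (not_not.mpr ho'O)
  -- minimal level analysis in O
  have hvpos : 0 < v := by
    have := hB1.2.1
    have : 0 < B1.card := Finset.card_pos.mpr ⟨oeq, hoeq1⟩
    omega
  obtain ⟨a1, ha1S, hE1, ha1min⟩ := topset_erase_min O r1 h1 hB1 ⟨oeq, hoeq1⟩
  obtain ⟨a2, ha2S, hE2, ha2min⟩ := topset_erase_min O r2 h2 hB2 ⟨oeq, hoeq2⟩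
  have hdisjE : (B1.erase a1) ∩ (B2.erase a2) = ∅ :=
    hmin (v - 1) (by omega) _ _ hE1 hE2
  have key : ∀ x, x ∈ B1 → x ∈ B2 → x = a1 ∨ x = a2 := by
    intro x hx1 hx2
    by_contra h
    push_neg at h
    have : x ∈ (B1.erase a1) ∩ (B2.erase a2) :=
      Finset.mem_inter.mpr ⟨Finset.mem_erase.mpr ⟨h.1, hx1⟩, Finset.mem_erase.mpr ⟨h.2, hx2⟩⟩
    rw [hdisjE] at this
    exact absurd this (Finset.notMem_empty _)
  have hoeqa2 : oeq = a2 := by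
    rcases key oeq hoeq1 hoeq2 with h | h
    · exfalso
      have := ha1min o' ho'B1
      rw [← h] at this
      omega
    · exact h
  have ho'a1 : o' = a1 := by
    rcases key o' ho'B1 ho'B2 with h | h
    · exact h
    · exact absurd (h.trans hoeqa2.symm) hne
  -- case split on oeq ∈ B2'
  by_cases hoeqB2' : oeq ∈ B2'
  · -- Case 1: three distinct elements in B1' ∩ B2' ⊆ {b1, b2}
    have hNB2' : ∀ n ∈ O' \ O, n ∈ B2' := by
      intro n hn
      by_contra h
      have h1n := hB2'.2.2 oeq hoeqB2' n (Finset.mem_sdiff.mp hn).1 h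
      have h2n := (hnew n hn).2
      omega
    have hv'pos : 0 < v' := by
      have := hB1'.2.1
      have : 0 < B1'.card := Finset.card_pos.mpr ⟨oeq, hoeqB1'⟩
      omega
    obtain ⟨b1, hb1S, hF1, _⟩ := topset_erase_min O' r1' h1' hB1' ⟨oeq, hoeqB1'⟩
    obtain ⟨b2, hb2S, hF2, _⟩ := topset_erase_min O' r2' h2' hB2' ⟨oeq, hoeqB2'⟩
    have hdisjF : (B1'.erase b1) ∩ (B2'.erase b2) = ∅ :=
      hmin' (v' - 1) (by omega) _ _ hF1 hF2
    have key' : ∀ x, x ∈ B1' → x ∈ B2' → x = b1 ∨ x = b2 := by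
      intro x hx1 hx2
      by_contra h
      push_neg at h
      have : x ∈ (B1'.erase b1) ∩ (B2'.erase b2) :=
        Finset.mem_inter.mpr ⟨Finset.mem_erase.mpr ⟨h.1, hx1⟩, Finset.mem_erase.mpr ⟨h.2, hx2⟩⟩
      rw [hdisjF] at this
      exact absurd this (Finset.notMem_empty _)
    obtain ⟨n, hnN⟩ := hNne
    have hnO : n ∉ O := (Finset.mem_sdiff.mp hnN).2
    have h_n := key' n (hNB1' n hnN) (hNB2' n hnN)
    have h_o := key' o' ho'1 ho'2
    have h_e := key' oeq hoeqB1' hoeqB2'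
    have hno' : n ≠ o' := fun h => hnO (h ▸ ho'O)
    have hnoeq : n ≠ oeq := fun h => hnO (h ▸ hoeqO)
    rcases h_n with h | h <;> rcases h_o with h' | h' <;> rcases h_e with h'' | h'' <;>
      first
        | exact hno' (h.trans h'.symm)
        | exact hnoeq (h.trans h''.symm)
        | exact hne (h'.trans h''.symm)
  · -- Case 2: B1 ∪ N ⊆ B1' forces v' ≥ v + m, but B2' ⊆ (B2 \ {oeq}) ∪ N forces v' ≤ v - 1 + m
    have hB1sub : B1 ∪ N ⊆ B1' := by
      apply Finset.union_subset
      · intro x hx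
        by_cases hxo : x = o'
        · exact hxo ▸ ho'1
        · have hle := ha1min x hx
          rw [← ho'a1] at hle
          have hstrict : r1 o' < r1 x := by
            have : r1 o' ≠ r1 x := fun h => hxo (h1 (hB1.1 hx) ho'O h.symm)
            omega
          have hlt' := hext1 o' ho'O x (hB1.1 hx) hstrict
          by_contra hx'
          have := hB1'.2.2 o' ho'1 x (hOO.1 (hB1.1 hx)) hx'
          omega
      · intro x hx
        exact hNB1' x hx
    have hge : v + m ≤ v' := by
      have hc := Finset.card_le_card hB1sub
      rw [Finset.card_union_of_disjoint hdisj1, hB1.2.1, hB1'.2.1] at hc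
      exact hc
    have hB2'sub2 : B2' ⊆ (B2.erase oeq) ∪ N := by
      intro x hx
      rcases Finset.mem_union.mp (hB2'sub hx) with h | h
      · exact Finset.mem_union_left _ (Finset.mem_erase.mpr ⟨fun he => hoeqB2' (he ▸ hx), h⟩)
      · exact Finset.mem_union_right _ h
    have hle2 : v' ≤ v - 1 + m := by
      have hc := Finset.card_le_card hB2'sub2
      have hcu := Finset.card_union_le (B2.erase oeq) N
      rw [Finset.card_erase_of_mem hoeq2, hB2.2.1] at hcu
      rw [hB2'.2.1] at hc
      omega
    omega


/-- the RC rule is monotonic: if `O ⊂ O'`, the orders on `O'` extend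
those on `O`, `o_eq` is in the RC set of the smaller instance, and every outcome
of `O' \ O` is strictly preferred to `o_eq` by both parties, then every outcome of
the RC set of the larger instance is weakly preferred to `o_eq` by both parties. -/
theorem rc_monotonic {α : Type*} [DecidableEq α]
    (O O' : Finset α) (hOO : O ⊂ O')
    (r1 r2 r1' r2' : α → ℕ)
    (h1 : Set.InjOn r1 O) (h2 : Set.InjOn r2 O)
    (h1' : Set.InjOn r1' O') (h2' : Set.InjOn r2' O')
    (hext1 : ∀ o1 ∈ O, ∀ o2 ∈ O, r1 o1 < r1 o2 → r1' o1 < r1' o2)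
    (hext2 : ∀ o1 ∈ O, ∀ o2 ∈ O, r2 o1 < r2 o2 → r2' o1 < r2' o2)
    (R : Finset α) (hR : IsRC O r1 r2 R) (oeq : α) (hoeq : oeq ∈ R)
    (hnew : ∀ o ∈ O' \ O, r1' oeq < r1' o ∧ r2' oeq < r2' o) :
    ∀ R' : Finset α, IsRC O' r1' r2' R' →
      ∀ o' ∈ R', r1' oeq ≤ r1' o' ∧ r2' oeq ≤ r2' o' := by
  intro R' hR' o' ho'
  refine ⟨?_, ?_⟩
  · exact rc_mono_side O O' hOO r1 r2 r1' r2' h1 h2 h1' h2' hext1 hext2 R hR oeq hoeq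
      hnew R' hR' o' ho'
  · exact rc_mono_side O O' hOO r2 r1 r2' r1' h2 h1 h2' h1' hext2 hext1 R (isRC_swap hR)
      oeq hoeq (fun o ho => ⟨(hnew o ho).2, (hnew o ho).1⟩) R' (isRC_swap hR') o' ho'
end

section
/- There is no ex-post equilibrium for the VAOV protocol: there do not exist strategy maps s_1, s_2 (from a party's own preference order to a full strategy) such that for every pair of preference orders, each s_k(≻_k) is a best response to s_{3−k}(≻_{3−k}) in the induced full-information game. -/
/-- Outcome from a responder node: the outcome `o` is on the table in round set `O`,
the proposer plays `P` and the responder plays `R`. -/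
noncomputable def respOut {α : Type*} [DecidableEq α] [Inhabited α]
    (P R : NegStrat α) (O : Finset α) (o : α) : α :=
  if R.2 O o = true then o else play R P (O.erase o)

/-- `(S1, S2)` is a subgame perfect equilibrium of the VAOV game on `O` with rank
functions `r1`, `r2` (higher rank = more preferred): at every subgame (every
nonempty `O' ⊆ O`, with either player as proposer, and every responder node after
an offer `o ∈ O'`), no player can improve her outcome by a (valid) deviation. -/
def IsSPE {α : Type*} [DecidableEq α] [Inhabited α]
    (r1 r2 : α → ℕ) (O : Finset α) (S1 S2 : NegStrat α) : Prop :=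
  ∀ O' : Finset α, O' ⊆ O → O'.Nonempty →
    ((∀ T1 : NegStrat α, ValidStrat T1 → r1 (play T1 S2 O') ≤ r1 (play S1 S2 O')) ∧
     (∀ T2 : NegStrat α, ValidStrat T2 → r2 (play S1 T2 O') ≤ r2 (play S1 S2 O')) ∧
     (∀ T2 : NegStrat α, ValidStrat T2 → r2 (play T2 S1 O') ≤ r2 (play S2 S1 O')) ∧
     (∀ T1 : NegStrat α, ValidStrat T1 → r1 (play S2 T1 O') ≤ r1 (play S2 S1 O')) ∧
     (∀ o ∈ O',
       (∀ T2 : NegStrat α, ValidStrat T2 →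
          r2 (respOut S1 T2 O' o) ≤ r2 (respOut S1 S2 O' o)) ∧
       (∀ T1 : NegStrat α, ValidStrat T1 →
          r1 (respOut T1 S2 O' o) ≤ r1 (respOut S1 S2 O' o)) ∧
       (∀ T1 : NegStrat α, ValidStrat T1 →
          r1 (respOut S2 T1 O' o) ≤ r1 (respOut S2 S1 O' o)) ∧
       (∀ T2 : NegStrat α, ValidStrat T2 →
          r2 (respOut T2 S1 O' o) ≤ r2 (respOut S2 S1 O' o))))


open Finset

section

variable {α : Type*} [DecidableEq α] [Inhabited α]

theorem play_of_card_le_one {S1 S2 : NegStrat α} {O : Finset α} {a : α}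
    (hO : O.card ≤ 1) (ha : a ∈ O) : play S1 S2 O = a := by
  rw [play, if_pos hO, dif_pos ⟨a, ha⟩]
  exact card_le_one.mp hO _ (Classical.choose_spec _) _ ha

theorem play_eq_respOut {S1 S2 : NegStrat α} {O : Finset α}
    (hO : 1 < O.card) (hoffer : S1.1 O ∈ O) : play S1 S2 O = respOut S1 S2 O (S1.1 O) := by
  rw [play, if_neg hO.not_ge, dif_pos hoffer, respOut]

noncomputable def thresholdStrat (T : Finset α) : NegStrat α :=
  (fun O => if h : (O ∩ T).Nonempty then h.choose
    else if h : O.Nonempty then h.choose else default,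
   fun _ o => decide (o ∈ T))

theorem thresholdStrat_offer_mem {T O : Finset α} (h : (O ∩ T).Nonempty) :
    (thresholdStrat T).1 O ∈ O ∩ T := by
  simp only [thresholdStrat, dif_pos h]
  exact h.choose_spec

theorem thresholdStrat_accepts_iff {T O : Finset α} {o : α} :
    (thresholdStrat T).2 O o = true ↔ o ∈ T := by
  simp [thresholdStrat]

theorem validStrat_thresholdStrat (T : Finset α) : ValidStrat (thresholdStrat T) := by
  intro O hO
  by_cases h : (O ∩ T).Nonempty
  · exact mem_of_mem_inter_left (thresholdStrat_offer_mem h)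
  · simp only [thresholdStrat, dif_neg h, dif_pos hO]
    exact hO.choose_spec

/- Each rejected offer removes an outcome of `T` from the table when proposing, and an outcome
outside `T` when responding. -/
theorem play_thresholdStrat_mem (T : Finset α) {S : NegStrat α} (hS : ValidStrat S)
    (O : Finset α) (hO : O.Nonempty) :
    (O.card < 2 * #(O ∩ T) → play (thresholdStrat T) S O ∈ T) ∧
    (O.card ≤ 2 * #(O ∩ T) → play S (thresholdStrat T) O ∈ T) := by
  induction O using Finset.strongInduction with
  | H O ih =>
  have hpos : 0 < O.card := hO.card_pos
  by_cases hsmall : O.card ≤ 1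
  · have hsettled : O.card ≤ 2 * #(O ∩ T) → ∀ S1 S2 : NegStrat α, play S1 S2 O ∈ T := by
      intro hk S1 S2
      obtain ⟨b, hb⟩ : (O ∩ T).Nonempty := card_pos.mp (by omega)
      rw [play_of_card_le_one hsmall (mem_of_mem_inter_left hb)]
      exact mem_of_mem_inter_right hb
    exact ⟨fun hk => hsettled hk.le _ _, fun hk => hsettled hk _ _⟩
  have hbig : 1 < O.card := by omega
  constructor
  · intro hk
    have hoffer := thresholdStrat_offer_mem (T := T) (card_pos.mp (by omega : 0 < #(O ∩ T)))
    set a := (thresholdStrat T).1 O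
    rw [play_eq_respOut hbig (mem_of_mem_inter_left hoffer), respOut]
    split_ifs
    · exact mem_of_mem_inter_right hoffer
    have hinter : O.erase a ∩ T = (O ∩ T).erase a := erase_inter a O T
    have hcard := card_erase_of_mem (mem_of_mem_inter_left hoffer)
    have hcardT := card_erase_of_mem hoffer
    refine (ih _ (erase_ssubset (mem_of_mem_inter_left hoffer)) (card_pos.mp (by omega))).2 ?_
    rw [hinter]
    omega
  · intro hk
    set z := S.1 O
    rw [play_eq_respOut hbig (hS O hO), respOut]
    split_ifs with haccept
    · exact thresholdStrat_accepts_iff.mp haccept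
    have hzT : z ∉ T := fun h => haccept (thresholdStrat_accepts_iff.mpr h)
    have hinter : O.erase z ∩ T = O ∩ T := by
      rw [erase_inter, erase_eq_of_notMem fun h => hzT (mem_of_mem_inter_right h)]
    have hcard := card_erase_of_mem (hS O hO)
    refine (ih _ (erase_ssubset (hS O hO)) (card_pos.mp (by omega))).1 ?_
    rw [hinter]
    omega

theorem le_rank_play_of_bestResponse_left {r : α → ℕ} {k : ℕ} {O : Finset α}
    {S1 S2 : NegStrat α} (hS2 : ValidStrat S2)
    (hbest : ∀ T1 : NegStrat α, ValidStrat T1 → r (play T1 S2 O) ≤ r (play S1 S2 O))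
    (hk : O.card < 2 * #{z ∈ O | k ≤ r z}) : k ≤ r (play S1 S2 O) := by
  set T := {z ∈ O | k ≤ r z}
  have hOT : O ∩ T = T := inter_eq_right.mpr (filter_subset _ O)
  have hTO : #T ≤ O.card := card_filter_le _ _
  have hO : O.Nonempty := card_pos.mp (by omega)
  have hsecured := (play_thresholdStrat_mem T hS2 O hO).1 (by rwa [hOT])
  exact (mem_filter.mp hsecured).2.trans (hbest _ (validStrat_thresholdStrat T))

theorem le_rank_play_of_bestResponse_right {r : α → ℕ} {k : ℕ} {O : Finset α}
    {S1 S2 : NegStrat α} (hS1 : ValidStrat S1)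
    (hbest : ∀ T2 : NegStrat α, ValidStrat T2 → r (play S1 T2 O) ≤ r (play S1 S2 O))
    (hO : O.Nonempty) (hk : O.card ≤ 2 * #{z ∈ O | k ≤ r z}) : k ≤ r (play S1 S2 O) := by
  set T := {z ∈ O | k ≤ r z}
  have hOT : O ∩ T = T := inter_eq_right.mpr (filter_subset _ O)
  have hsecured := (play_thresholdStrat_mem T hS1 O hO).2 (by rwa [hOT])
  exact (mem_filter.mp hsecured).2.trans (hbest _ (validStrat_thresholdStrat T))

end

/- Rank functions of `≻₁`, `≻₂`, `≻₁'` and of `≻₂' : o₄ ≻ o₁ ≻ o₂ ≻ o₃ ≻ o₅ ≻ o₆`, with `i : Fin 6`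
standing for `o_{i+1}` and higher rank meaning more preferred. -/
def rank₁ : Fin 6 → ℕ := ![0, 1, 4, 3, 2, 5]
def rank₂ : Fin 6 → ℕ := ![0, 1, 3, 5, 4, 2]
def rank₁' : Fin 6 → ℕ := ![2, 3, 4, 0, 1, 5]
def rank₂' : Fin 6 → ℕ := ![4, 3, 2, 5, 1, 0]

/-- there is no ex-post equilibrium for the VAOV protocol over six
outcomes: there are no strategy maps `s1, s2` (assigning a valid full strategy to
each strict preference order, represented by an injective rank function) such
that for every pair of realized preference orders, each party's assigned strategy
is a best response to the other's in the induced full-information game starting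
from all six outcomes (party 1 proposing first). -/
theorem no_ex_post_equilibrium :
    ¬ ∃ s1 s2 : (Fin 6 → ℕ) → NegStrat (Fin 6),
      (∀ r : Fin 6 → ℕ, Function.Injective r → ValidStrat (s1 r) ∧ ValidStrat (s2 r)) ∧
      (∀ r1 r2 : Fin 6 → ℕ, Function.Injective r1 → Function.Injective r2 →
        (∀ T1 : NegStrat (Fin 6), ValidStrat T1 →
          r1 (play T1 (s2 r2) Finset.univ) ≤ r1 (play (s1 r1) (s2 r2) Finset.univ)) ∧
        (∀ T2 : NegStrat (Fin 6), ValidStrat T2 →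
          r2 (play (s1 r1) T2 Finset.univ) ≤ r2 (play (s1 r1) (s2 r2) Finset.univ))) := by
  rintro ⟨s1, s2, hvalid, hbest⟩
  have h₁ : Function.Injective rank₁ := by decide
  have h₂ : Function.Injective rank₂ := by decide
  have h₁' : Function.Injective rank₁' := by decide
  have h₂' : Function.Injective rank₂' := by decide
  have hsecured : ∀ r1 r2, Function.Injective r1 → Function.Injective r2 → ∀ k1 k2 : ℕ,
      6 < 2 * #{z | k1 ≤ r1 z} → 6 ≤ 2 * #{z | k2 ≤ r2 z} →
      k1 ≤ r1 (play (s1 r1) (s2 r2) univ) ∧ k2 ≤ r2 (play (s1 r1) (s2 r2) univ) :=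
    fun r1 r2 h1 h2 _ _ hk1 hk2 =>
      ⟨le_rank_play_of_bestResponse_left (hvalid r2 h2).2 (hbest r1 r2 h1 h2).1 hk1,
       le_rank_play_of_bestResponse_right (hvalid r1 h1).1 (hbest r1 r2 h1 h2).2 univ_nonempty hk2⟩
  have hplay₁₂' : play (s1 rank₁) (s2 rank₂') univ = 3 := by
    obtain ⟨hk1, hk2⟩ := hsecured _ _ h₁ h₂' 2 3 (by decide) (by decide)
    exact (by decide : ∀ z, 2 ≤ rank₁ z → 3 ≤ rank₂' z → z = 3) _ hk1 hk2
  have hplay₁₂ : play (s1 rank₁) (s2 rank₂) univ = 3 := by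
    have hmimic := (hbest _ _ h₁ h₂).2 _ (hvalid _ h₂').2
    rw [hplay₁₂'] at hmimic
    exact (by decide : ∀ z, 5 ≤ rank₂ z → z = 3) _ hmimic
  have hplay₁'₂ : play (s1 rank₁') (s2 rank₂) univ = 2 := by
    obtain ⟨hk1, hk2⟩ := hsecured _ _ h₁' h₂ 2 3 (by decide) (by decide)
    exact (by decide : ∀ z, 2 ≤ rank₁' z → 3 ≤ rank₂ z → z = 2) _ hk1 hk2
  have hdeviate := (hbest _ _ h₁ h₂).1 _ (hvalid _ h₁').1
  rw [hplay₁₂, hplay₁'₂] at hdeviate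
  exact absurd hdeviate (by decide)
end
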